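/- arXiv:math/0606623 — 2 statements merged into one kernel-verified Lean document; each statement's English description precedes it below -/
import Mathlib

section
/- Let S be a measurable abelian semigroup with neutral element 0, and (Q_t)_{t≥0} a Markov transition semigroup on S with Q_t(0,·) = δ_0 satisfying the branching property. Given probability measures (γ_t)_{t≥0} on S, define Q^γ_t(x,·) := Q_t(x,·) * γ_t. Then (Q^γ_t)_{t≥0} satisfies the Chapman–Kolmogorov equation Q^γ_{r+t} = Q^γ_r ∘ Q^γ_t for all r,t ≥ 0 if and only if γ_{r+t} = (γ_r Q_t) * γ_t for all r,t ≥ 0. -/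
open MeasureTheory
open scoped ENNReal

/-- Convolution of two measures on a measurable additive semigroup:
the pushforward of the product measure under addition. -/
noncomputable def mconv {S : Type*} [MeasurableSpace S] [Add S]
    (μ ν : Measure S) : Measure S :=
  (μ.prod ν).map (fun p : S × S => p.1 + p.2)

section Aux

variable {S : Type*} [MeasurableSpace S] [AddCommMonoid S] [MeasurableAdd₂ S]

lemma mconv_eq_conv (μ ν : Measure S) : mconv μ ν = μ.conv ν := rfl

lemma mconv_apply' (μ ν : Measure S) [SFinite ν] {A : Set S} (hA : MeasurableSet A) :
    mconv μ ν A = ∫⁻ x, ν ((x + ·) ⁻¹' A) ∂μ := by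
  rw [mconv, Measure.map_apply measurable_add hA, Measure.prod_apply (measurable_add hA)]
  rfl

lemma meas_slice (ν : Measure S) [SFinite ν] {A : Set S} (hA : MeasurableSet A) :
    Measurable fun x : S => ν ((x + ·) ⁻¹' A) :=
  measurable_measure_prodMk_left (measurable_add hA)

lemma isProb_mconv (μ ν : Measure S) [IsProbabilityMeasure μ] [IsProbabilityMeasure ν] :
    IsProbabilityMeasure (mconv μ ν) := by
  rw [mconv_eq_conv]; infer_instance

lemma dirac_zero_mconv (ν : Measure S) [SFinite ν] : mconv (Measure.dirac 0) ν = ν := by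
  rw [mconv_eq_conv, Measure.dirac_zero_conv]

lemma isProb_bind (μ : Measure S) (κ : S → Measure S) (hκ : Measurable κ)
    [IsProbabilityMeasure μ] (h : ∀ x, IsProbabilityMeasure (κ x)) :
    IsProbabilityMeasure (μ.bind κ) := by
  constructor
  rw [Measure.bind_apply MeasurableSet.univ hκ.aemeasurable]
  simp [fun x => (h x).measure_univ]

lemma measurable_mconv_left (κ : S → Measure S) (hκ : Measurable κ) (ν : Measure S) [SFinite ν] :
    Measurable fun y => mconv (κ y) ν := by
  apply Measure.measurable_of_measurable_coe
  intro A hA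
  simp_rw [mconv_apply' _ ν hA]
  exact (Measure.measurable_lintegral (meas_slice ν hA)).comp hκ

lemma key (Q : ℝ → S → Measure S) (hQmeas : ∀ t, Measurable (Q t))
    (hQprob : ∀ t x, IsProbabilityMeasure (Q t x))
    (hQsg : ∀ r t, 0 ≤ r → 0 ≤ t → ∀ x : S, (Q r x).bind (Q t) = Q (r + t) x)
    (hbranch : ∀ t, 0 ≤ t → ∀ x₁ x₂ : S, Q t (x₁ + x₂) = mconv (Q t x₁) (Q t x₂))
    (γ : ℝ → Measure S) (hγprob : ∀ t, IsProbabilityMeasure (γ t))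
    (r t : ℝ) (hr : 0 ≤ r) (ht : 0 ≤ t) (x : S) :
    (mconv (Q r x) (γ r)).bind (fun y => mconv (Q t y) (γ t))
      = mconv (Q (r + t) x) (mconv ((γ r).bind (Q t)) (γ t)) := by
  haveI := hγprob r; haveI := hγprob t
  haveI := hQprob r x
  haveI : IsProbabilityMeasure ((γ r).bind (Q t)) := isProb_bind _ _ (hQmeas t) (hQprob t)
  haveI : IsProbabilityMeasure (mconv ((γ r).bind (Q t)) (γ t)) := isProb_mconv _ _
  ext A hA
  have hgm : Measurable fun u : S => γ t ((u + ·) ⁻¹' A) := meas_slice (γ t) hA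
  -- a kernel version of `Q t`
  let κ : ProbabilityTheory.Kernel S S := ⟨Q t, hQmeas t⟩
  haveI : ProbabilityTheory.IsMarkovKernel κ := ⟨fun a => hQprob t a⟩
  -- joint measurability of (b, c) ↦ ∫⁻ d, γ t ((c + d + ·) ⁻¹' A) ∂(Q t b)
  have hjoint : Measurable fun p : S × S => ∫⁻ d, γ t ((p.2 + d + ·) ⁻¹' A) ∂(Q t p.1) := by
    have := Measurable.lintegral_kernel_prod_right
      (κ := κ.comap Prod.fst measurable_fst)
      (f := fun (p : S × S) (d : S) => γ t ((p.2 + d + ·) ⁻¹' A))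
      (hgm.comp ((measurable_snd.comp measurable_fst).add measurable_snd))
    simpa [κ, ProbabilityTheory.Kernel.comap_apply] using this
  have hFm : Measurable fun y => mconv (Q t y) (γ t) :=
    measurable_mconv_left (Q t) (hQmeas t) (γ t)
  have hcoe : Measurable fun y => mconv (Q t y) (γ t) A :=
    (Measure.measurable_coe hA).comp hFm
  -- compute the left-hand side
  have lhs_eq : (mconv (Q r x) (γ r)).bind (fun y => mconv (Q t y) (γ t)) A
      = ∫⁻ a, ∫⁻ b, ∫⁻ c, ∫⁻ d, γ t ((c + d + ·) ⁻¹' A) ∂(Q t b) ∂(Q t a) ∂(γ r) ∂(Q r x) := by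
    calc (mconv (Q r x) (γ r)).bind (fun y => mconv (Q t y) (γ t)) A
        = ∫⁻ y, mconv (Q t y) (γ t) A ∂(mconv (Q r x) (γ r)) := Measure.bind_apply hA hFm.aemeasurable
      _ = ∫⁻ p : S × S, mconv (Q t (p.1 + p.2)) (γ t) A ∂((Q r x).prod (γ r)) := by
          rw [mconv]; exact lintegral_map hcoe measurable_add
      _ = ∫⁻ a, ∫⁻ b, mconv (Q t (a + b)) (γ t) A ∂(γ r) ∂(Q r x) :=
          lintegral_prod _ (hcoe.comp measurable_add).aemeasurable
      _ = _ := by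
          refine lintegral_congr fun a => lintegral_congr fun b => ?_
          haveI := hQprob t a; haveI := hQprob t b
          rw [hbranch t ht a b]
          calc mconv (mconv (Q t a) (Q t b)) (γ t) A
              = ∫⁻ u, γ t ((u + ·) ⁻¹' A) ∂(mconv (Q t a) (Q t b)) := mconv_apply' _ _ hA
            _ = ∫⁻ p : S × S, γ t ((p.1 + p.2 + ·) ⁻¹' A) ∂((Q t a).prod (Q t b)) := by
                rw [mconv]; exact lintegral_map hgm measurable_add
            _ = ∫⁻ c, ∫⁻ d, γ t ((c + d + ·) ⁻¹' A) ∂(Q t b) ∂(Q t a) :=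
                lintegral_prod _ (hgm.comp measurable_add).aemeasurable
  -- compute the right-hand side
  have pre_eq : ∀ c d : S, ((d + ·) ⁻¹' ((c + ·) ⁻¹' A)) = ((c + d + ·) ⁻¹' A) := by
    intro c d; ext e; simp [Set.mem_preimage, add_assoc]
  have rhs_eq : mconv (Q (r + t) x) (mconv ((γ r).bind (Q t)) (γ t)) A
      = ∫⁻ a, ∫⁻ c, ∫⁻ b, ∫⁻ d, γ t ((c + d + ·) ⁻¹' A) ∂(Q t b) ∂(γ r) ∂(Q t a) ∂(Q r x) := by
    rw [mconv_apply' _ _ hA, ← hQsg r t hr ht x,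
      Measure.lintegral_bind (hQmeas t).aemeasurable (meas_slice _ hA).aemeasurable]
    refine lintegral_congr fun a => lintegral_congr fun c => ?_
    rw [mconv_apply' _ _ (hA.preimage (measurable_const_add c)),
      Measure.lintegral_bind (hQmeas t).aemeasurable (meas_slice _ (hA.preimage (measurable_const_add c))).aemeasurable]
    refine lintegral_congr fun b => lintegral_congr fun d => ?_
    rw [pre_eq]
  rw [lhs_eq, rhs_eq]
  refine lintegral_congr fun a => ?_
  haveI := hQprob t a
  exact lintegral_lintegral_swap hjoint.aemeasurable

end Aux

/-- `Q^γ_t(x,·) := Q_t(x,·) * γ_t` satisfies the Chapman–Kolmogorov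
equation iff `(γ_t)` is a skew convolution semigroup: `γ_{r+t} = (γ_r Q_t) * γ_t`. -/
theorem skew_conv_semigroup_iff
    {S : Type*} [MeasurableSpace S] [AddCommMonoid S] [MeasurableAdd₂ S]
    (Q : ℝ → S → Measure S)
    (hQmeas : ∀ t, Measurable (Q t))
    (hQprob : ∀ t x, IsProbabilityMeasure (Q t x))
    (hQ0 : ∀ t, 0 ≤ t → Q t 0 = Measure.dirac 0)
    (hQsg : ∀ r t, 0 ≤ r → 0 ≤ t → ∀ x : S, (Q r x).bind (Q t) = Q (r + t) x)
    (hbranch : ∀ t, 0 ≤ t → ∀ x₁ x₂ : S, Q t (x₁ + x₂) = mconv (Q t x₁) (Q t x₂))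
    (γ : ℝ → Measure S)
    (hγprob : ∀ t, IsProbabilityMeasure (γ t)) :
    (∀ r t, 0 ≤ r → 0 ≤ t → ∀ x : S,
        (mconv (Q r x) (γ r)).bind (fun y => mconv (Q t y) (γ t))
          = mconv (Q (r + t) x) (γ (r + t)))
      ↔ (∀ r t, 0 ≤ r → 0 ≤ t → γ (r + t) = mconv ((γ r).bind (Q t)) (γ t)) := by
  constructor
  · intro h r t hr ht
    have h0 := h r t hr ht 0
    rw [key Q hQmeas hQprob hQsg hbranch γ hγprob r t hr ht 0,
      hQ0 (r + t) (by linarith)] at h0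
    haveI := hγprob r; haveI := hγprob t; haveI := hγprob (r + t)
    haveI : IsProbabilityMeasure ((γ r).bind (Q t)) := isProb_bind _ _ (hQmeas t) (hQprob t)
    haveI : IsProbabilityMeasure (mconv ((γ r).bind (Q t)) (γ t)) := isProb_mconv _ _
    rw [dirac_zero_mconv, dirac_zero_mconv] at h0
    exact h0.symm
  · intro h r t hr ht x
    rw [key Q hQmeas hQprob hQsg hbranch γ hγprob r t hr ht x, h r t hr ht]
end

section
/- Let β₁₁(t) = e^{b₁t} and β₂₂(t) = e^{b₂t} for real constants b₁,b₂, and suppose α : [0,∞) → ℝ is continuous with α(0)=0 and satisfies the cocycle equation α(r+t) = β₁₁(r)α(t) + α(r)β₂₂(t)² for all r,t ≥ 0. If b₁ ≠ 2b₂, then α(t) = c(e^{b₁t} − e^{2b₂t}) for some constant c; if b₁ = 2b₂, then α(t) = c·t·e^{b₁t} for some constant c. -/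
open Set

open Filter Topology in
lemma cauchy_on_Ici (f : ℝ → ℝ) (hc : ContinuousOn f (Ici 0))
    (hadd : ∀ r t : ℝ, 0 ≤ r → 0 ≤ t → f (r + t) = f r + f t) :
    ∀ t : ℝ, 0 ≤ t → f t = t * f 1 := by
  have hf0 : f 0 = 0 := by
    have := hadd 0 0 le_rfl le_rfl; simp at this; linarith
  have hnat : ∀ n : ℕ, ∀ t : ℝ, 0 ≤ t → f (n * t) = n * f t := by
    intro n
    induction n with
    | zero => intro t ht; simp [hf0]
    | succ n ih =>
      intro t ht
      have : ((n:ℝ)+1) * t = (n:ℝ)*t + t := by ring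
      push_cast
      rw [this, hadd ((n:ℝ)*t) t (by positivity) ht, ih t ht]
      ring
  have hrat : ∀ q : ℚ, 0 ≤ q → f (q : ℝ) = (q : ℝ) * f 1 := by
    intro q hq
    have hq' : (0:ℝ) ≤ (q:ℝ) := by exact_mod_cast hq
    have hd : (0:ℝ) < (q.den : ℝ) := by exact_mod_cast q.pos
    have hnum : (q.num.toNat : ℤ) = q.num := Int.toNat_of_nonneg (Rat.num_nonneg.2 hq)
    have hN : ((q.num.toNat : ℕ) : ℝ) = ((q.num : ℤ) : ℝ) := by exact_mod_cast hnum
    have h1 : (q.den : ℝ) * (q : ℝ) = (q.num.toNat : ℝ) := by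
      have : ((q.den : ℚ)) * q = (q.num : ℚ) := by
        rw [mul_comm]; exact_mod_cast Rat.mul_den_eq_num q
      have h2 : ((q.den : ℝ)) * (q:ℝ) = ((q.num : ℤ) : ℝ) := by exact_mod_cast this
      rw [h2, hN]
    have h3 : f ((q.den : ℝ) * (q:ℝ)) = (q.den : ℝ) * f (q:ℝ) := hnat q.den (q:ℝ) hq'
    have h4 : f ((q.num.toNat : ℝ) * 1) = (q.num.toNat : ℝ) * f 1 :=
      hnat q.num.toNat 1 zero_le_one
    rw [mul_one] at h4
    rw [h1, h4] at h3
    have : f (q:ℝ) = (q.num.toNat : ℝ) / (q.den : ℝ) * f 1 := by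
      field_simp at h3 ⊢; linarith [h3]
    rw [this]
    congr 1
    field_simp [← h1]
    linarith [h1]
  intro t ht
  -- choose rationals from the right
  have hex : ∀ n : ℕ, ∃ q : ℚ, t < (q:ℝ) ∧ (q:ℝ) < t + 1/((n:ℝ)+1) := by
    intro n
    have hpos : (0:ℝ) < 1/((n:ℝ)+1) := by positivity
    exact exists_rat_btwn (by linarith)
  choose u hu1 hu2 using hex
  have hunn : ∀ n, (0:ℝ) ≤ (u n : ℝ) := fun n => le_of_lt (lt_of_le_of_lt ht (hu1 n))
  have htend : Tendsto (fun n : ℕ => ((u n : ℝ))) atTop (𝓝 t) := by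
    have hup : Tendsto (fun n : ℕ => t + 1/((n:ℝ)+1)) atTop (𝓝 t) := by
      have := tendsto_one_div_add_atTop_nhds_zero_nat (𝕜 := ℝ)
      have h := this.const_add t
      simpa using h
    exact tendsto_of_tendsto_of_tendsto_of_le_of_le tendsto_const_nhds hup
      (fun n => le_of_lt (hu1 n)) (fun n => le_of_lt (hu2 n))
  have htendW : Tendsto (fun n : ℕ => ((u n : ℝ))) atTop (𝓝[Ici 0] t) :=
    tendsto_nhdsWithin_of_tendsto_nhds_of_eventually_within _ htend
      (Eventually.of_forall (fun n => hunn n))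
  have h5 : Tendsto (fun n : ℕ => f ((u n : ℝ))) atTop (𝓝 (f t)) :=
    ((hc t ht).tendsto).comp htendW
  have h6 : Tendsto (fun n : ℕ => f ((u n : ℝ))) atTop (𝓝 (t * f 1)) := by
    have : (fun n : ℕ => f ((u n : ℝ))) = fun n => ((u n : ℝ)) * f 1 := by
      funext n
      exact hrat (u n) (by exact_mod_cast hunn n)
    rw [this]
    exact htend.mul_const (f 1)
  exact tendsto_nhds_unique h5 h6

/-- the cocycle equation (4.6) for the diffusion coefficient of a
regular two-dimensional homogeneous affine semigroup. -/
theorem affine_diffusion_coefficient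
    (b₁ b₂ : ℝ) (α : ℝ → ℝ)
    (hc : ContinuousOn α (Ici 0)) (h0 : α 0 = 0)
    (hcocycle : ∀ r t : ℝ, 0 ≤ r → 0 ≤ t →
      α (r + t) = Real.exp (b₁ * r) * α t + α r * (Real.exp (b₂ * t)) ^ 2) :
    (b₁ ≠ 2 * b₂ →
      ∃ c : ℝ, ∀ t : ℝ, 0 ≤ t →
        α t = c * (Real.exp (b₁ * t) - Real.exp (2 * b₂ * t))) ∧
    (b₁ = 2 * b₂ →
      ∃ c : ℝ, ∀ t : ℝ, 0 ≤ t → α t = c * t * Real.exp (b₁ * t)) := by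
  set a : ℝ := b₁ - 2 * b₂ with ha
  set f : ℝ → ℝ := fun t => α t * Real.exp (-(2 * b₂) * t) with hfdef
  have hα : ∀ t : ℝ, α t = f t * Real.exp (2 * b₂ * t) := by
    intro t
    simp only [hfdef]
    rw [mul_assoc, ← Real.exp_add]
    norm_num
  have hf : ∀ r t : ℝ, 0 ≤ r → 0 ≤ t →
      f (r + t) = Real.exp (a * r) * f t + f r := by
    intro r t hr ht
    have e1 : Real.exp (-(2*b₂)*(r+t)) = Real.exp (-(2*b₂)*r) * Real.exp (-(2*b₂)*t) := by
      rw [← Real.exp_add]; ring_nf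
    have e2 : Real.exp (b₁*r) * Real.exp (-(2*b₂)*r) = Real.exp (a*r) := by
      rw [← Real.exp_add]; ring_nf; rw [ha]; ring_nf
    have e3 : Real.exp (b₂*t)^2 * Real.exp (-(2*b₂)*t) = 1 := by
      rw [sq, ← Real.exp_add, ← Real.exp_add]
      norm_num
      ring_nf
    simp only [hfdef]
    rw [hcocycle r t hr ht, e1]
    linear_combination (α t * Real.exp (-(2*b₂)*t)) * e2 + (α r * Real.exp (-(2*b₂)*r)) * e3
  have hsym : ∀ r t : ℝ, 0 ≤ r → 0 ≤ t →
      (Real.exp (a * r) - 1) * f t = (Real.exp (a * t) - 1) * f r := by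
    intro r t hr ht
    have h1 := hf r t hr ht
    have h2 := hf t r ht hr
    rw [add_comm t r] at h2
    linarith [h1, h2]
  constructor
  · intro hne
    have hane : a ≠ 0 := by simp [ha]; intro h; exact hne (by linarith)
    have hea : Real.exp a - 1 ≠ 0 := by
      intro h
      exact hane ((Real.exp_eq_one_iff a).1 (by linarith))
    refine ⟨f 1 / (Real.exp a - 1), fun t ht => ?_⟩
    have h1 := hsym 1 t zero_le_one ht
    rw [mul_one] at h1
    have hft : f t = f 1 / (Real.exp a - 1) * (Real.exp (a * t) - 1) := by
      field_simp
      linarith [h1]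
    rw [hα t, hft]
    have e4 : Real.exp (a*t) * Real.exp (2*b₂*t) = Real.exp (b₁*t) := by
      rw [← Real.exp_add]; ring_nf; rw [ha]; ring_nf
    linear_combination (f 1 / (Real.exp a - 1)) * e4
  · intro heq
    have ha0 : a = 0 := by rw [ha, heq]; ring
    have hadd : ∀ r t : ℝ, 0 ≤ r → 0 ≤ t → f (r + t) = f r + f t := by
      intro r t hr ht
      have := hf r t hr ht
      rw [ha0] at this
      simpa [add_comm] using this
    have hfc : ContinuousOn f (Ici 0) := by
      apply hc.mul
      exact (Real.continuous_exp.comp (continuous_const.mul continuous_id)).continuousOn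
    have hlin := cauchy_on_Ici f hfc hadd
    refine ⟨f 1, fun t ht => ?_⟩
    rw [hα t, hlin t ht, heq]
    ring
end
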